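/- arXiv:2209.01545 — 2 statements merged into one kernel-verified Lean document; each statement's English description precedes it below -/
import Mathlib

section
/- Any finite simple graph with m edges can be decomposed into at most m planar subgraphs, and in fact every graph on n vertices decomposes into at most ⌈n/2⌉ planar subgraphs. -/
/-- A simple graph is planar if it has a drawing in the plane `ℂ` with straight-line
edges (by Fáry's theorem this is equivalent to general planarity for simple graphs):
vertices map injectively to points, two distinct edges meet only in common endpoints,
and no vertex lies on an edge other than at its endpoints. -/
def IsPlanar {V : Type*} (G : SimpleGraph V) : Prop :=
  ∃ f : V → ℂ, Function.Injective f ∧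
    (∀ ⦃u v x y : V⦄, G.Adj u v → G.Adj x y → ({u, v} : Set V) ≠ {x, y} →
      segment ℝ (f u) (f v) ∩ segment ℝ (f x) (f y) ⊆ f '' (({u, v} : Set V) ∩ {x, y})) ∧
    (∀ ⦃w u v : V⦄, G.Adj u v → f w ∈ segment ℝ (f u) (f v) → w = u ∨ w = v)

/-!
If every edge of a graph meets one of two vertices `a`, `b`, the graph has a straight-line
drawing: put `a` at `-1`, `b` at `1` and the other vertices at distinct points of the positive
imaginary axis. Edges at `a` lie left of the axis and edges at `b` right of it, distinct edges at
the same pivot leave it in distinct directions, and the edge `ab` is the real interval `(-1, 1)`;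
so the open edges are pairwise disjoint and avoid the vertices.

Both decompositions consist of such graphs: the single edges of `G`, and, after numbering the
vertices `0, …, n - 1`, for each `k < ⌈n / 2⌉` the edges whose smaller endpoint is `2k` or `2k + 1`.
-/

open Complex Set Function

lemma im_eq_zero_of_mem_openSegment_neg_one_one {p : ℂ} (hp : p ∈ openSegment ℝ (-1) 1) :
    p.im = 0 ∧ |p.re| < 1 := by
  rw [openSegment_eq_image'] at hp
  obtain ⟨t, ⟨ht₀, ht₁⟩, rfl⟩ := hp
  simp only [add_im, neg_im, one_im, real_smul, mul_im, ofReal_re, ofReal_im, sub_im, add_re,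
    neg_re, one_re, mul_re, sub_re]
  refine ⟨by ring, abs_lt.2 ⟨by linarith, by linarith⟩⟩

lemma im_eq_of_mem_openSegment_neg_one_mul_I {c : ℝ} {p : ℂ}
    (hp : p ∈ openSegment ℝ (-1) (c * I)) : p.re ∈ Ioo (-1) 0 ∧ p.im = (1 + p.re) * c := by
  rw [openSegment_eq_image'] at hp
  obtain ⟨t, ⟨ht₀, ht₁⟩, rfl⟩ := hp
  simp only [add_im, neg_im, one_im, real_smul, mul_im, ofReal_re, ofReal_im, sub_im, add_re,
    neg_re, one_re, mul_re, sub_re, I_re, I_im, mem_Ioo]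
  exact ⟨⟨by linarith, by linarith⟩, by ring⟩

lemma im_eq_of_mem_openSegment_one_mul_I {c : ℝ} {p : ℂ}
    (hp : p ∈ openSegment ℝ 1 (c * I)) : p.re ∈ Ioo 0 1 ∧ p.im = (1 - p.re) * c := by
  rw [openSegment_eq_image'] at hp
  obtain ⟨t, ⟨ht₀, ht₁⟩, rfl⟩ := hp
  simp only [add_im, one_im, real_smul, mul_im, ofReal_re, ofReal_im, sub_im, add_re,
    one_re, mul_re, sub_re, I_re, I_im, mem_Ioo]
  exact ⟨⟨by linarith, by linarith⟩, by ring⟩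

theorem isPlanar_of_openSegment {V : Type*} {H : SimpleGraph V} (f : V → ℂ) (hf : Injective f)
    (hvert : ∀ ⦃w u v⦄, H.Adj u v → f w ∉ openSegment ℝ (f u) (f v))
    (hedge : ∀ ⦃u v x y⦄, H.Adj u v → H.Adj x y →
      (openSegment ℝ (f u) (f v) ∩ openSegment ℝ (f x) (f y)).Nonempty → s(u, v) = s(x, y)) :
    IsPlanar H := by
  have onEdge : ∀ ⦃w u v⦄, H.Adj u v → f w ∈ segment ℝ (f u) (f v) → w = u ∨ w = v := by
    intro w u v huv hw
    rw [← insert_endpoints_openSegment] at hw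
    rcases hw with h | h | h
    exacts [.inl (hf h), .inr (hf h), absurd h (hvert huv)]
  refine ⟨f, hf, fun u v x y huv hxy hne p ⟨hp₁, hp₂⟩ ↦ ?_, onEdge⟩
  have endpoint_or_open : ∀ ⦃u v⦄, p ∈ segment ℝ (f u) (f v) →
      p = f u ∨ p = f v ∨ p ∈ openSegment ℝ (f u) (f v) := by
    intro u v hp
    rwa [← insert_endpoints_openSegment] at hp
  rcases endpoint_or_open hp₁ with rfl | rfl | hp₁' <;>
    try exact ⟨_, ⟨by simp, onEdge hxy hp₂⟩, rfl⟩
  rcases endpoint_or_open hp₂ with rfl | rfl | hp₂' <;>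
    try exact ⟨_, ⟨onEdge huv hp₁, by simp⟩, rfl⟩
  obtain ⟨rfl, rfl⟩ | ⟨rfl, rfl⟩ := Sym2.eq_iff.1 (hedge huv hxy ⟨p, hp₁', hp₂'⟩)
  exacts [absurd rfl hne, absurd (Set.pair_comm _ _) hne]

section PivotDrawing

variable {V : Type*} [DecidableEq V] (a b : V) (g : V → ℝ)

def pivotDrawing (x : V) : ℂ := if x = a then -1 else if x = b then 1 else g x * I

lemma pivotDrawing_cases (x : V) :
    (x = a ∧ pivotDrawing a b g x = -1) ∨ (x ≠ a ∧ x = b ∧ pivotDrawing a b g x = 1) ∨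
      (x ≠ a ∧ x ≠ b ∧ pivotDrawing a b g x = g x * I) := by
  unfold pivotDrawing
  by_cases ha : x = a
  · simp [ha]
  by_cases hb : x = b
  · subst hb; simp [ha]
  · simp [ha, hb]

variable {a b g}

lemma injective_pivotDrawing (hg : Injective g) :
    Injective (pivotDrawing a b g) := by
  intro x y h
  rcases pivotDrawing_cases a b g x with ⟨hxa, hx⟩ | ⟨-, hxb, hx⟩ | ⟨-, -, hx⟩ <;>
    rcases pivotDrawing_cases a b g y with ⟨hya, hy⟩ | ⟨-, hyb, hy⟩ | ⟨-, -, hy⟩ <;>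
    rw [hx, hy] at h <;> norm_num [Complex.ext_iff] at h
  exacts [hxa.trans hya.symm, hxb.trans hyb.symm, hg h]

/- A point of an open edge determines the edge: it is `ab` if the point is real; otherwise the
sign of the real part gives the pivot, and the other endpoint `x` is read off from the height
`p.im / (1 - |p.re|) = g x` at which the line from that pivot through `p` meets the imaginary
axis. -/
lemma mem_openSegment_pivotDrawing {H : SimpleGraph V} (hab : ∀ e ∈ H.edgeSet, a ∈ e ∨ b ∈ e)
    {u v : V} (huv : H.Adj u v) {p : ℂ}
    (hp : p ∈ openSegment ℝ (pivotDrawing a b g u) (pivotDrawing a b g v)) :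
    ((p.im = 0 ∧ |p.re| < 1) ∧ s(u, v) = s(a, b)) ∨
      ∃ x, p.re ≠ 0 ∧ |p.re| < 1 ∧ p.im = (1 - |p.re|) * g x ∧
        s(u, v) = if p.re < 0 then s(a, x) else s(b, x) := by
  wlog hu : u = a ∨ u = b generalizing u v
  · have hv : v = a ∨ v = b := by have := hab s(u, v) huv; simp only [Sym2.mem_iff] at this; tauto
    rw [Sym2.eq_swap]
    exact this huv.symm (by rwa [openSegment_symm]) hv
  rcases pivotDrawing_cases a b g u with ⟨rfl, hu⟩ | ⟨-, rfl, hu⟩ | ⟨hua, hub, -⟩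
  · rcases pivotDrawing_cases u b g v with ⟨rfl, -⟩ | ⟨-, rfl, hv⟩ | ⟨-, -, hv⟩
    · exact (huv.ne rfl).elim
    · rw [hu, hv] at hp
      exact .inl ⟨im_eq_zero_of_mem_openSegment_neg_one_one hp, rfl⟩
    · rw [hu, hv] at hp
      obtain ⟨⟨hre₁, hre₂⟩, him⟩ := im_eq_of_mem_openSegment_neg_one_mul_I hp
      refine .inr ⟨v, hre₂.ne, ?_, ?_, by rw [if_pos hre₂]⟩
      · rw [abs_of_neg hre₂]; linarith
      · rw [abs_of_neg hre₂, him]; ring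
  · rcases pivotDrawing_cases a u g v with ⟨rfl, hv⟩ | ⟨-, rfl, -⟩ | ⟨-, -, hv⟩
    · rw [hu, hv, openSegment_symm] at hp
      exact .inl ⟨im_eq_zero_of_mem_openSegment_neg_one_one hp, Sym2.eq_swap⟩
    · exact (huv.ne rfl).elim
    · rw [hu, hv] at hp
      obtain ⟨⟨hre₁, hre₂⟩, him⟩ := im_eq_of_mem_openSegment_one_mul_I hp
      refine .inr ⟨v, hre₁.ne', ?_, ?_, by rw [if_neg hre₁.not_gt]⟩
      · rw [abs_of_pos hre₁]; linarith
      · rw [abs_of_pos hre₁, him]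
  · exact (hu.elim hua hub).elim

theorem isPlanar_pivotDrawing {H : SimpleGraph V} (hab : ∀ e ∈ H.edgeSet, a ∈ e ∨ b ∈ e)
    (hg : Injective g) (hpos : ∀ x, 0 < g x) : IsPlanar H := by
  refine isPlanar_of_openSegment (pivotDrawing a b g) (injective_pivotDrawing hg)
    (fun w u v huv hw ↦ ?_) (fun u v x y huv hxy ⟨p, hp₁, hp₂⟩ ↦ ?_)
  · have hw' := pivotDrawing_cases a b g w
    rcases mem_openSegment_pivotDrawing hab huv hw with ⟨⟨him, hre⟩, -⟩ | ⟨z, hre₀, hre, -⟩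
    · rcases hw' with ⟨-, h⟩ | ⟨-, -, h⟩ | ⟨-, -, h⟩ <;> simp [h, (hpos w).ne'] at him hre
    · rcases hw' with ⟨-, h⟩ | ⟨-, -, h⟩ | ⟨-, -, h⟩ <;> simp [h] at hre hre₀
  · rcases mem_openSegment_pivotDrawing hab huv hp₁ with ⟨⟨him, -⟩, he⟩ | ⟨z, -, hre, him, he⟩ <;>
      rcases mem_openSegment_pivotDrawing hab hxy hp₂ with
        ⟨⟨him', -⟩, he'⟩ | ⟨z', -, hre', him', he'⟩
    · rw [he, he']
    · have := mul_pos (sub_pos.2 hre') (hpos z'); linarith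
    · have := mul_pos (sub_pos.2 hre) (hpos z); linarith
    · rw [he, he', hg (mul_left_cancel₀ (sub_pos.2 hre).ne' (him.symm.trans him'))]

end PivotDrawing

theorem isPlanar_of_forall_mem_edgeSet_mem_or_mem {V : Type*} [Countable V] {H : SimpleGraph V}
    (a b : V) (hab : ∀ e ∈ H.edgeSet, a ∈ e ∨ b ∈ e) : IsPlanar H := by
  classical
  obtain ⟨φ, hφ⟩ := exists_injective_nat V
  exact isPlanar_pivotDrawing (g := fun x ↦ φ x + 1) hab
    (fun x y h ↦ hφ (by simpa using h)) (fun x ↦ by positivity)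

namespace SimpleGraph

variable {V K : Type*} {G : SimpleGraph V}

theorem adj_iff_existsUnique_labelGraph (C : G.EdgeLabeling K) (u v : V) :
    G.Adj u v ↔ ∃! k, (C.labelGraph k).Adj u v := by
  simp only [EdgeLabeling.labelGraph_adj]
  refine ⟨fun h ↦ ⟨C ⟨s(u, v), h⟩, ⟨h, rfl⟩, fun k ⟨_, hk⟩ ↦ hk.symm⟩, ?_⟩
  rintro ⟨k, ⟨h, -⟩, -⟩
  exact h

theorem isPlanar_labelGraph_of_injective [Countable V] {C : G.EdgeLabeling K}
    (hC : Injective C) (e : G.edgeSet) : IsPlanar (C.labelGraph (C e)) := by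
  obtain ⟨e, he⟩ := e
  induction e using Sym2.ind with
  | _ u v =>
    refine isPlanar_of_forall_mem_edgeSet_mem_or_mem u v fun e' he' ↦ ?_
    obtain ⟨⟨h, hCe⟩, -⟩ := (edgeSet_fromEdgeSet _ ▸ he' : _)
    obtain rfl : e' = s(u, v) := congrArg Subtype.val (hC hCe)
    exact .inl (Sym2.mem_mk_left u v)

def pairLabeling {n : ℕ} (G : SimpleGraph V) (e : V ≃ Fin n) :
    G.EdgeLabeling (Fin ((n + 1) / 2)) :=
  EdgeLabeling.mk (fun u v _ ↦ ⟨min (e u : ℕ) (e v) / 2, by have := (e u).isLt; omega⟩)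
    (fun u v _ ↦ by simp only [min_comm])

theorem isPlanar_labelGraph_pairLabeling [Countable V] {n : ℕ} (e : V ≃ Fin n)
    (k : Fin ((n + 1) / 2)) : IsPlanar ((G.pairLabeling e).labelGraph k) := by
  have hk := k.isLt
  let a := e.symm ⟨2 * k, by omega⟩
  -- `b = a` for the last class when `n` is odd
  let b := e.symm ⟨min (2 * k + 1) (n - 1), by omega⟩
  have hpair : ∀ w, (e w : ℕ) / 2 = k → w = a ∨ w = b := by
    intro w hw
    have := (e w).isLt
    obtain h | h : (e w : ℕ) = 2 * k ∨ (e w : ℕ) = min (2 * (k : ℕ) + 1) (n - 1) := by omega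
    exacts [.inl (e.symm_apply_eq.2 (Fin.ext h.symm)).symm,
      .inr (e.symm_apply_eq.2 (Fin.ext h.symm)).symm]
  refine isPlanar_of_forall_mem_edgeSet_mem_or_mem a b fun e' he' ↦ ?_
  induction e' using Sym2.ind with
  | _ u v =>
    obtain ⟨h, hk⟩ := (EdgeLabeling.labelGraph_adj u v).1 he'
    have hmin : min (e u : ℕ) (e v) / 2 = k := congrArg Fin.val hk
    rcases min_choice (e u : ℕ) (e v) with hu | hv
    · rcases hpair u (hu ▸ hmin) with rfl | rfl <;> simp
    · rcases hpair v (hv ▸ hmin) with rfl | rfl <;> simp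

theorem exists_isPlanar_decomposition (C : G.EdgeLabeling K)
    (hC : ∀ k, IsPlanar (C.labelGraph k)) :
    ∃ H : K → SimpleGraph V, (∀ k, IsPlanar (H k)) ∧ ∀ u v, G.Adj u v ↔ ∃! k, (H k).Adj u v :=
  ⟨C.labelGraph, hC, adj_iff_existsUnique_labelGraph C⟩

end SimpleGraph

theorem planar_decomposition_bounds_general {V : Type*} [Fintype V]
    (G : SimpleGraph V) [DecidableRel G.Adj] :
    (∃ k ≤ G.edgeFinset.card, ∃ H : Fin k → SimpleGraph V,
      (∀ i, IsPlanar (H i)) ∧ (∀ u v : V, G.Adj u v ↔ ∃! i, (H i).Adj u v)) ∧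
    (∃ k ≤ (Fintype.card V + 1) / 2, ∃ H : Fin k → SimpleGraph V,
      (∀ i, IsPlanar (H i)) ∧ (∀ u v : V, G.Adj u v ↔ ∃! i, (H i).Adj u v)) := by
  let edgeIndex : G.edgeSet ≃ Fin G.edgeFinset.card :=
    Fintype.equivFinOfCardEq G.edgeFinset_card.symm
  refine ⟨⟨_, le_rfl, SimpleGraph.exists_isPlanar_decomposition (C := ⇑edgeIndex) fun i ↦ ?_⟩,
    ⟨_, le_rfl, SimpleGraph.exists_isPlanar_decomposition _
      (SimpleGraph.isPlanar_labelGraph_pairLabeling (Fintype.equivFin V))⟩⟩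
  simpa using SimpleGraph.isPlanar_labelGraph_of_injective edgeIndex.injective (edgeIndex.symm i)

/-- Any finite simple graph with `m` edges decomposes into at most `m` planar subgraphs
(edge sets partitioning `E(G)`); in fact every graph on `n` vertices decomposes into at
most `⌈n/2⌉` planar subgraphs. -/
theorem planar_decomposition_bounds {V : Type*} [Fintype V] [DecidableEq V]
    (G : SimpleGraph V) [DecidableRel G.Adj] :
    (∃ k ≤ G.edgeFinset.card, ∃ H : Fin k → SimpleGraph V,
      (∀ i, IsPlanar (H i)) ∧ (∀ u v : V, G.Adj u v ↔ ∃! i, (H i).Adj u v)) ∧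
    (∃ k ≤ (Fintype.card V + 1) / 2, ∃ H : Fin k → SimpleGraph V,
      (∀ i, IsPlanar (H i)) ∧ (∀ u v : V, G.Adj u v ↔ ∃! i, (H i).Adj u v)) :=
  planar_decomposition_bounds_general G
end

section
/- Every single-qubit unitary U ∈ SU(2) (up to global phase, any U ∈ U(2)) can be decomposed as U = e^{iθ} J(α) J(β) J(γ) for real θ, α, β, γ, where J(α) is the (unnormalized, up to a factor 1/√2) matrix [[1, e^{iα}],[1, -e^{iα}]]. -/
open Complex Matrix

/-- The gate `J(α) = (1/√2) [[1, e^{iα}], [1, -e^{iα}]]`. -/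
noncomputable def Jgate (α : ℝ) : Matrix (Fin 2) (Fin 2) ℂ :=
  ((Real.sqrt 2 : ℂ)⁻¹) • !![1, Complex.exp (α * Complex.I);
                             1, -Complex.exp (α * Complex.I)]

open ComplexConjugate

/-!
Write `H = J(0)` for the Hadamard matrix. A unitary `2 × 2` matrix is determined by its first
column and its determinant, since its adjugate is `det M • star M`. The first column of
`e^{iθ} J(α) J(β) J(γ)` does not depend on `γ`, and after applying `H` it becomes
`e^{iθ} ((1 + e^{iβ}) / 2, e^{iα} (1 - e^{iβ}) / 2)`; every unit vector of `ℂ²` has this form.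
The determinant `-e^{i(2θ + α + β + γ)}` can then be matched to `det M` by the choice of `γ`.
-/

theorem Matrix.adjugate_eq_det_smul_star {n α : Type*} [DecidableEq n] [Fintype n] [CommRing α]
    [StarRing α] {M : Matrix n n α} (hM : M ∈ unitaryGroup n α) :
    adjugate M = det M • star M := by
  calc adjugate M = star M * M * adjugate M := by rw [Unitary.star_mul_self_of_mem hM, one_mul]
    _ = det M • star M := by rw [mul_assoc, mul_adjugate, Matrix.mul_smul, mul_one]

theorem Matrix.eq_of_mem_unitaryGroup_fin_two {α : Type*} [CommRing α] [StarRing α]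
    {M : Matrix (Fin 2) (Fin 2) α} (hM : M ∈ unitaryGroup (Fin 2) α) :
    M = !![M 0 0, -(det M * star (M 1 0)); M 1 0, det M * star (M 0 0)] := by
  have hadj := congrFun₂ (adjugate_eq_det_smul_star hM)
  have h₀₁ := hadj 0 1
  have h₀₀ := hadj 0 0
  simp only [adjugate_fin_two, of_apply, cons_val', cons_val_zero, cons_val_one, smul_apply,
    star_apply, smul_eq_mul] at h₀₁ h₀₀
  ext i j
  fin_cases i <;> fin_cases j
  · rfl
  · simp [← h₀₁]
  · rfl
  · simp [← h₀₀]

theorem Matrix.ext_of_mem_unitaryGroup_fin_two {α : Type*} [CommRing α] [StarRing α]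
    {M N : Matrix (Fin 2) (Fin 2) α} (hM : M ∈ unitaryGroup (Fin 2) α)
    (hN : N ∈ unitaryGroup (Fin 2) α) (h₀ : M 0 0 = N 0 0) (h₁ : M 1 0 = N 1 0)
    (hdet : det M = det N) : M = N := by
  rw [eq_of_mem_unitaryGroup_fin_two hM, eq_of_mem_unitaryGroup_fin_two hN, h₀, h₁, hdet]

theorem Matrix.sq_norm_add_sq_norm_of_mem_unitaryGroup_fin_two {M : Matrix (Fin 2) (Fin 2) ℂ}
    (hM : M ∈ unitaryGroup (Fin 2) ℂ) (j : Fin 2) : ‖M 0 j‖ ^ 2 + ‖M 1 j‖ ^ 2 = 1 := by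
  have h := congrFun₂ (mem_unitaryGroup_iff'.mp hM) j j
  simp only [mul_apply, Fin.sum_univ_two, star_apply, RCLike.star_def, conj_mul',
    one_apply_eq] at h
  exact_mod_cast h

theorem Complex.exp_ofReal_mul_I_mem_unitary (θ : ℝ) : exp (θ * I) ∈ unitary ℂ := by
  rw [Unitary.mem_iff_star_mul_self, star_def, conj_mul', norm_exp_ofReal_mul_I]
  simp

theorem Complex.exists_circle_params_of_sq_norm_add_sq_norm (x y : ℂ)
    (h : ‖x‖ ^ 2 + ‖y‖ ^ 2 = 1) :
    ∃ p q w : ℂ, ‖p‖ = 1 ∧ ‖q‖ = 1 ∧ ‖w‖ = 1 ∧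
      p * (1 + w) / 2 = x ∧ p * q * (1 - w) / 2 = y := by
  obtain ⟨w, hw⟩ : ∃ w : ℂ, w = ‖x‖ + ‖y‖ * I := ⟨_, rfl⟩
  have hw_norm : ‖w‖ = 1 := by rw [hw, norm_add_mul_I, h, Real.sqrt_one]
  have hw_conj : w * conj w = 1 := by rw [mul_conj', hw_norm]; norm_num
  have hw_add : w + conj w = 2 * ‖x‖ := by rw [hw]; simp; ring
  have hw_sub : w - conj w = 2 * ‖y‖ * I := by rw [hw]; simp; ring
  obtain ⟨P, hP⟩ : ∃ P : ℂ, P = exp (arg x * I) := ⟨_, rfl⟩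
  obtain ⟨Q, hQ⟩ : ∃ Q : ℂ, Q = exp (arg y * I) := ⟨_, rfl⟩
  have hP_conj : P * conj P = 1 := by rw [mul_conj', hP, norm_exp_ofReal_mul_I]; norm_num
  have hx : (‖x‖ : ℂ) * P = x := hP ▸ norm_mul_exp_arg_mul_I x
  have hy : (‖y‖ : ℂ) * Q = y := hQ ▸ norm_mul_exp_arg_mul_I y
  -- for `‖w‖ = 1`: `(1 + w²) / 2 = w Re w` and `(1 - w²) / 2 = -i w Im w` (half-angle formulas)
  refine ⟨P * conj w, Q * conj P * I, w ^ 2, ?_, ?_, ?_, ?_, ?_⟩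
  · simp [hP, hw_norm]
  · simp [hP, hQ]
  · simp [hw_norm]
  · linear_combination (P * w / 2) * hw_conj + P / 2 * hw_add + hx
  · linear_combination (Q * I * conj w * (1 - w ^ 2) / 2) * hP_conj - (Q * I * w / 2) * hw_conj
      - (Q * I / 2) * hw_sub - Q * ‖y‖ * I_sq + hy

theorem Complex.ofReal_sqrt_two_inv_sq : ((Real.sqrt 2 : ℂ)⁻¹) ^ 2 = 2⁻¹ := by
  rw [inv_pow, ← ofReal_pow, Real.sq_sqrt zero_le_two, ofReal_ofNat]

theorem Jgate_mem_unitaryGroup (α : ℝ) : Jgate α ∈ unitaryGroup (Fin 2) ℂ := by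
  have hs := ofReal_sqrt_two_inv_sq
  have he : exp (α * I) * conj (exp (α * I)) = 1 := by
    rw [mul_conj', norm_exp_ofReal_mul_I]; norm_num
  rw [mem_unitaryGroup_iff]
  ext i j
  fin_cases i <;> fin_cases j <;>
    simp [Jgate, mul_apply, Fin.sum_univ_two, star_apply] <;>
    first
      | linear_combination (1 + exp (α * I) * conj (exp (α * I))) * hs + 2⁻¹ * he
      | linear_combination (1 - exp (α * I) * conj (exp (α * I))) * hs - 2⁻¹ * he

theorem det_Jgate (α : ℝ) : det (Jgate α) = -exp (α * I) := by
  rw [Jgate, det_smul, det_fin_two_of, Fintype.card_fin, ofReal_sqrt_two_inv_sq]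
  ring

theorem Jgate_mul_Jgate_mul_Jgate_apply_zero_zero (α β γ : ℝ) :
    (Jgate α * Jgate β * Jgate γ) 0 0
      = (Real.sqrt 2 : ℂ)⁻¹ * ((1 + exp (β * I)) + exp (α * I) * (1 - exp (β * I))) / 2 := by
  simp [Jgate, mul_apply, Fin.sum_univ_two]
  rw [div_eq_mul_inv, ← ofReal_sqrt_two_inv_sq]
  ring

theorem Jgate_mul_Jgate_mul_Jgate_apply_one_zero (α β γ : ℝ) :
    (Jgate α * Jgate β * Jgate γ) 1 0
      = (Real.sqrt 2 : ℂ)⁻¹ * ((1 + exp (β * I)) - exp (α * I) * (1 - exp (β * I))) / 2 := by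
  simp [Jgate, mul_apply, Fin.sum_univ_two]
  rw [div_eq_mul_inv, ← ofReal_sqrt_two_inv_sq]
  ring

theorem exp_smul_Jgate_mul_Jgate_mul_Jgate_mem_unitaryGroup (θ α β γ : ℝ) :
    exp (θ * I) • (Jgate α * Jgate β * Jgate γ) ∈ unitaryGroup (Fin 2) ℂ :=
  Unitary.smul_mem_of_mem (exp_ofReal_mul_I_mem_unitary θ) <|
    mul_mem (mul_mem (Jgate_mem_unitaryGroup α) (Jgate_mem_unitaryGroup β))
      (Jgate_mem_unitaryGroup γ)

/-- Every single-qubit unitary can be decomposed (up to global phase) into three `J`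
gates: the set `{e^{iθ} J(α) J(β) J(γ) : θ, α, β, γ ∈ ℝ}` is exactly `U(2)`. -/
theorem J_decomposition (M : Matrix (Fin 2) (Fin 2) ℂ) :
    (∃ θ α β γ : ℝ, M = Complex.exp (θ * Complex.I) • (Jgate α * Jgate β * Jgate γ))
      ↔ M ∈ Matrix.unitaryGroup (Fin 2) ℂ := by
  refine ⟨fun ⟨θ, α, β, γ, hM⟩ ↦ hM ▸ exp_smul_Jgate_mul_Jgate_mul_Jgate_mem_unitaryGroup θ α β γ,
    fun hM ↦ ?_⟩
  set s : ℂ := (Real.sqrt 2 : ℂ)⁻¹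
  have hs : s ^ 2 = 2⁻¹ := ofReal_sqrt_two_inv_sq
  have hcol : ‖s * (M 0 0 + M 1 0)‖ ^ 2 + ‖s * (M 0 0 - M 1 0)‖ ^ 2 = 1 := by
    have hs_norm : ‖s‖ ^ 2 = 2⁻¹ := by rw [← norm_pow, hs]; norm_num
    rw [norm_mul, norm_mul, mul_pow, mul_pow, ← mul_add, parallelogram_law_with_norm ℂ,
      sq_norm_add_sq_norm_of_mem_unitaryGroup_fin_two hM 0, hs_norm]
    norm_num
  obtain ⟨p, q, w, hp, hq, hw, hx, hy⟩ := exists_circle_params_of_sq_norm_add_sq_norm _ _ hcol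
  obtain ⟨θ, rfl⟩ := (norm_eq_one_iff p).1 hp
  obtain ⟨α, rfl⟩ := (norm_eq_one_iff q).1 hq
  obtain ⟨β, rfl⟩ := (norm_eq_one_iff w).1 hw
  have hdet : ‖-det M / (exp (θ * I) ^ 2 * exp (α * I) * exp (β * I))‖ = 1 := by
    have hdetM : ‖det M‖ = 1 := CStarRing.norm_of_mem_unitary (det_of_mem_unitary hM)
    simp [hdetM]
  obtain ⟨γ, hγ⟩ := (norm_eq_one_iff _).1 hdet
  refine ⟨θ, α, β, γ, ext_of_mem_unitaryGroup_fin_two hM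
    (exp_smul_Jgate_mul_Jgate_mul_Jgate_mem_unitaryGroup θ α β γ) ?_ ?_ ?_⟩
  · rw [Matrix.smul_apply, Jgate_mul_Jgate_mul_Jgate_apply_zero_zero, smul_eq_mul]
    linear_combination (-s) * (hx + hy) - 2 * M 0 0 * hs
  · rw [Matrix.smul_apply, Jgate_mul_Jgate_mul_Jgate_apply_one_zero, smul_eq_mul]
    linear_combination (-s) * (hx - hy) - 2 * M 1 0 * hs
  · rw [det_smul, det_mul, det_mul, det_Jgate, det_Jgate, det_Jgate, hγ, Fintype.card_fin]
    field_simp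
end
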